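/- arXiv:2505.22448 — 4 statements merged into one kernel-verified Lean document; each statement's English description precedes it below -/
import Mathlib

section
/- Let f, g : [0,1] → ℕ̄ be lower semicontinuous. Then the following are equivalent: (i) for every t ∈ [0,1] there exist an open neighborhood U of t in [0,1] and a natural number c ∈ ℕ such that f(s) ≤ c ≤ g(s) for all s ∈ U; (ii) there exists a continuous function g̃ : [0,1] → ℝ such that f(t) ≤ g̃(t) ≤ g(t) for every t ∈ [0,1]. -/
/-
A continuous `g̃` squeezed between `f` and `g` yields the local condition with `c = ⌊g̃ t⌋₊`:
on the open set where `g̃` stays within distance one of that integer, `f ≤ g̃ < c + 1` and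
`c - 1 < g̃ ≤ g` force `f ≤ c ≤ g`, because `f` and `g` take integer (or infinite) values.
Conversely, the real intervals `[f s, g s]` are convex, and the local condition gives a locally
constant selection of them; a partition of unity on the (paracompact, normal) space glues these
constants into a continuous selection.
-/

open scoped ENNReal

/-- The canonical order embedding of `ℕ∞ = ℕ ∪ {∞}` into the extended reals,
used to compare `ℕ∞`-valued functions with real-valued functions:
`f t ≤ (g̃ t : EReal)` says that `f t` is a finite natural number whose real coercion
is at most `g̃ t`, and `(g̃ t : EReal) ≤ g t` is interpreted with `∞` dominating
every real number. -/
noncomputable def ENat.toEReal (a : ℕ∞) : EReal := ((a : ℝ≥0∞) : EReal)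

namespace ENat

lemma toEReal_mono : Monotone toEReal := fun _ _ h =>
  EReal.coe_ennreal_le_coe_ennreal_iff.2 (by exact_mod_cast h)

@[simp]
lemma toEReal_natCast (n : ℕ) : (n : ℕ∞).toEReal = ((n : ℝ) : EReal) := by
  unfold toEReal
  norm_cast

@[simp]
lemma toEReal_top : (⊤ : ℕ∞).toEReal = ⊤ := by
  simp [toEReal]

lemma toEReal_nonneg (a : ℕ∞) : 0 ≤ a.toEReal :=
  EReal.coe_ennreal_nonneg _

lemma le_natCast_of_toEReal_le {a : ℕ∞} {y : ℝ} {n : ℕ} (ha : a.toEReal ≤ y)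
    (hy : y < n + 1) : a ≤ n := by
  induction a using ENat.recTopCoe with
  | top => simp at ha
  | coe m =>
    rw [toEReal_natCast, EReal.coe_le_coe_iff] at ha
    exact_mod_cast Nat.lt_add_one_iff.1 (by exact_mod_cast ha.trans_lt hy)

lemma natCast_le_of_le_toEReal {b : ℕ∞} {y : ℝ} {n : ℕ} (hb : (y : EReal) ≤ b.toEReal)
    (hy : (n : ℝ) - 1 < y) : (n : ℕ∞) ≤ b := by
  induction b using ENat.recTopCoe with
  | top => exact le_top
  | coe m =>
    rw [toEReal_natCast, EReal.coe_le_coe_iff] at hb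
    have : (n : ℝ) < m + 1 := by linarith
    exact_mod_cast Nat.lt_add_one_iff.1 (by exact_mod_cast this)

lemma convex_setOf_toEReal_le_and_le_toEReal (a b : ℕ∞) :
    Convex ℝ {y : ℝ | a.toEReal ≤ y ∧ (y : EReal) ≤ b.toEReal} :=
  Set.OrdConnected.convex ⟨fun _ h₁ _ h₂ _ hz =>
    ⟨h₁.1.trans (EReal.coe_le_coe_iff.2 hz.1), (EReal.coe_le_coe_iff.2 hz.2).trans h₂.2⟩⟩

end ENat

open ENat

variable {X : Type*} [TopologicalSpace X]

theorem exists_continuous_between_of_locally_natCast_between [NormalSpace X]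
    [ParacompactSpace X] {f g : X → ℕ∞}
    (h : ∀ t, ∃ U : Set X, IsOpen U ∧ t ∈ U ∧ ∃ c : ℕ, ∀ s ∈ U, f s ≤ c ∧ (c : ℕ∞) ≤ g s) :
    ∃ g' : X → ℝ, Continuous g' ∧
      ∀ t, (f t).toEReal ≤ (g' t : EReal) ∧ (g' t : EReal) ≤ (g t).toEReal := by
  have hloc : ∀ t, ∃ c : ℝ, ∀ᶠ s in nhds t,
      c ∈ {y : ℝ | (f s).toEReal ≤ y ∧ (y : EReal) ≤ (g s).toEReal} := by
    intro t
    obtain ⟨U, hU, htU, c, hc⟩ := h t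
    refine ⟨c, Filter.eventually_of_mem (hU.mem_nhds htU) fun s hs => ?_⟩
    simpa using And.intro (toEReal_mono (hc s hs).1) (toEReal_mono (hc s hs).2)
  obtain ⟨g', hg'⟩ := exists_continuous_forall_mem_convex_of_local_const
    (fun t => convex_setOf_toEReal_le_and_le_toEReal (f t) (g t)) hloc
  exact ⟨g', g'.continuous, hg'⟩

theorem locally_natCast_between_of_continuous_between {f g : X → ℕ∞} {g' : X → ℝ}
    (hg' : Continuous g')
    (hbetween : ∀ t, (f t).toEReal ≤ (g' t : EReal) ∧ (g' t : EReal) ≤ (g t).toEReal) (t : X) :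
    ∃ U : Set X, IsOpen U ∧ t ∈ U ∧ ∃ c : ℕ, ∀ s ∈ U, f s ≤ c ∧ (c : ℕ∞) ≤ g s := by
  have hnonneg : 0 ≤ g' t :=
    EReal.coe_nonneg.1 ((toEReal_nonneg _).trans (hbetween t).1)
  set n := ⌊g' t⌋₊
  refine ⟨g' ⁻¹' Set.Ioo ((n : ℝ) - 1) (n + 1), isOpen_Ioo.preimage hg', ?_, n, ?_⟩
  · exact ⟨by linarith [Nat.floor_le hnonneg], Nat.lt_floor_add_one _⟩
  · intro s ⟨hs₁, hs₂⟩
    exact ⟨le_natCast_of_toEReal_le (hbetween s).1 hs₂,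
      natCast_le_of_le_toEReal (hbetween s).2 hs₁⟩

theorem stmt_4_general (f g : Set.Icc (0:ℝ) 1 → ℕ∞) :
    (∀ t : Set.Icc (0:ℝ) 1, ∃ U : Set (Set.Icc (0:ℝ) 1), IsOpen U ∧ t ∈ U ∧
        ∃ c : ℕ, ∀ s ∈ U, f s ≤ (c : ℕ∞) ∧ (c : ℕ∞) ≤ g s) ↔
      (∃ g' : Set.Icc (0:ℝ) 1 → ℝ, Continuous g' ∧
        ∀ t, (f t).toEReal ≤ (g' t : EReal) ∧ (g' t : EReal) ≤ (g t).toEReal) :=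
  ⟨exists_continuous_between_of_locally_natCast_between,
    fun ⟨_, hg', hbetween⟩ => locally_natCast_between_of_continuous_between hg' hbetween⟩

/-- For lower semicontinuous `f, g : [0,1] → ℕ∞`, the local interpolation
condition (around every point there are an open neighborhood `U` and `c ∈ ℕ` with
`f ≤ c ≤ g` on `U`) holds if and only if there is a continuous real-valued function `g̃`
with `f ≤ g̃ ≤ g` pointwise on `[0,1]`. -/
theorem stmt_4 (f g : Set.Icc (0:ℝ) 1 → ℕ∞)
    (hf : LowerSemicontinuous f) (hg : LowerSemicontinuous g) :
    (∀ t : Set.Icc (0:ℝ) 1, ∃ U : Set (Set.Icc (0:ℝ) 1), IsOpen U ∧ t ∈ U ∧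
        ∃ c : ℕ, ∀ s ∈ U, f s ≤ (c : ℕ∞) ∧ (c : ℕ∞) ≤ g s) ↔
      (∃ g' : Set.Icc (0:ℝ) 1 → ℝ, Continuous g' ∧
        ∀ t, (f t).toEReal ≤ (g' t : EReal) ∧ (g' t : EReal) ≤ (g t).toEReal) :=
  stmt_4_general f g
end

section
/- Let H be a separable complex Hilbert space and let b : [0,1] → B(H) be a norm-continuous map such that b(t) is a positive compact operator for every t ∈ [0,1]. Then for every ε > 0 there exists N ∈ ℕ such that rank((b(t) − ε)₊) ≤ N for all t ∈ [0,1]. -/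
open scoped ENNReal

/-- The rank of a bounded operator: the Hilbert-space dimension (as an element of
`ℕ∞ = ℕ ∪ {∞}`) of the closure of its range. -/
noncomputable def opRank {H : Type*} [NormedAddCommGroup H] [InnerProductSpace ℂ H]
    (a : H →L[ℂ] H) : ℕ∞ :=
  Cardinal.toENat (Module.rank ℂ (LinearMap.range (a : H →ₗ[ℂ] H)).topologicalClosure)

/-- The `ε`-cut-down `(a - ε)₊` of an operator, i.e. the continuous functional calculus of
`a` applied to the function `s ↦ max (s - ε) 0`. -/
noncomputable def cutDown {H : Type*} [NormedAddCommGroup H] [InnerProductSpace ℂ H]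
    [CompleteSpace H] (a : H →L[ℂ] H) (ε : ℝ) : H →L[ℂ] H :=
  cfc (fun s : ℝ => max (s - ε) 0) a


/-! If `‖a - a'‖ + δ < ε`, the quadratic form of `a` is `≥ ε ‖x‖²` on the closed range of
`(a - ε)₊`, while that of `a'` is `≤ δ ‖x‖²` on the orthogonal complement of the closed range
of `(a' - δ)₊`. These two subspaces therefore meet only in `0`, so the orthogonal projection
onto the closed range of `(a' - δ)₊` is injective on that of `(a - ε)₊`, and
`rank (a - ε)₊ ≤ rank (a' - δ)₊`. For compact `a'` and `δ > 0` the right-hand side is finite: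
the compression of `a'` to the closed range of `(a' - δ)₊` is compact and, being bounded below
by `δ`, invertible. Covering `[0, 1]` by finitely many sets `‖b t - b t₀‖ < ε / 2` and taking
`δ = ε / 2` bounds all the ranks. -/

open scoped InnerProductSpace

section InnerProductSpace

variable {𝕜 E : Type*} [RCLike 𝕜] [NormedAddCommGroup E] [InnerProductSpace 𝕜 E]

theorem ContinuousLinearMap.re_inner_le_re_inner_of_le {A B : E →L[𝕜] E} (h : A ≤ B) (x : E) :
    RCLike.re ⟪A x, x⟫_𝕜 ≤ RCLike.re ⟪B x, x⟫_𝕜 := by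
  have := ((ContinuousLinearMap.le_def A B).mp h).re_inner_nonneg_left x
  rw [sub_apply, inner_sub_left, map_sub] at this
  linarith

theorem ContinuousLinearMap.re_inner_sub_le (A B : E →L[𝕜] E) (x : E) :
    RCLike.re ⟪A x, x⟫_𝕜 - RCLike.re ⟪B x, x⟫_𝕜 ≤ ‖A - B‖ * ‖x‖ ^ 2 := by
  rw [← map_sub, ← inner_sub_left, ← sub_apply]
  calc RCLike.re ⟪(A - B) x, x⟫_𝕜 ≤ ‖(A - B) x‖ * ‖x‖ := re_inner_le_norm _ _
    _ ≤ ‖A - B‖ * ‖x‖ * ‖x‖ := by gcongr; exact (A - B).le_opNorm x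
    _ = ‖A - B‖ * ‖x‖ ^ 2 := by ring

theorem IsSelfAdjoint.orthogonal_closure_range {T : E →L[𝕜] E} [CompleteSpace E]
    (hT : IsSelfAdjoint T) :
    (LinearMap.range (T : E →ₗ[𝕜] E)).topologicalClosureᗮ = LinearMap.ker (T : E →ₗ[𝕜] E) := by
  rw [Submodule.orthogonal_closure]
  exact (T.orthogonal_range).trans (by rw [hT.adjoint_eq])

theorem Submodule.rank_le_of_disjoint_orthogonal {V W : Submodule 𝕜 E}
    [W.HasOrthogonalProjection] (h : Disjoint V Wᗮ) :
    Module.rank 𝕜 V ≤ Module.rank 𝕜 W := by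
  refine LinearMap.rank_le_of_injective ((W.orthogonalProjectionOnto : E →ₗ[𝕜] W) ∘ₗ V.subtype)
    (LinearMap.ker_eq_bot.mp (eq_bot_iff.mpr fun x hx => ?_))
  have hx' : (x : E) ∈ V ⊓ Wᗮ := ⟨x.2, W.orthogonalProjectionOnto_eq_zero_iff.mp hx⟩
  simpa [h.eq_bot] using hx'

theorem FiniteDimensional.of_isCompactOperator_of_le_re_inner {T : E →L[𝕜] E}
    (hT : IsCompactOperator T) (U : Submodule 𝕜 E) [CompleteSpace U] {c : ℝ} (hc : 0 < c)
    (h : ∀ x ∈ U, c * ‖x‖ ^ 2 ≤ RCLike.re ⟪T x, x⟫_𝕜) : FiniteDimensional 𝕜 U := by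
  set g : U →L[𝕜] U := U.orthogonalProjectionOnto ∘L T ∘L U.subtypeL
  have hg : IsCompactOperator g := (hT.comp_clm U.subtypeL).clm_comp U.orthogonalProjectionOnto
  obtain ⟨u, hu⟩ : IsUnit g := by
    refine g.isUnit_of_forall_le_norm_inner_map (c := c.toNNReal) (by simpa using hc) fun x => ?_
    have hinner : ⟪g x, x⟫_𝕜 = ⟪T x, x⟫_𝕜 :=
      U.inner_orthogonalProjectionOnto_eq_of_mem_right x (T x)
    rw [hinner, Real.coe_toNNReal _ hc.le, mul_comm]
    exact (h x x.2).trans (RCLike.re_le_norm _)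
  have hid : (id : U → U) = (↑u⁻¹ : U →L[𝕜] U) ∘ g := by
    ext1 x
    rw [← hu]
    exact (DFunLike.congr_fun u.inv_mul x).symm
  exact .of_isCompactOperator_id (hid ▸ hg.clm_comp _)

end InnerProductSpace

section CutDown

variable {H : Type*} [NormedAddCommGroup H] [InnerProductSpace ℂ H] [CompleteSpace H]
  {a a' : H →L[ℂ] H}

theorem isSelfAdjoint_cutDown (a : H →L[ℂ] H) (ε : ℝ) : IsSelfAdjoint (cutDown a ε) :=
  cfc_predicate _ a

theorem cutDown_mul_sub_algebraMap_mul_cutDown_nonneg (ha : IsSelfAdjoint a) (ε : ℝ) :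
    0 ≤ cutDown a ε * (a - algebraMap ℝ (H →L[ℂ] H) ε) * cutDown a ε := by
  have key : cfc (fun s : ℝ => max (s - ε) 0 * (s - ε) * max (s - ε) 0) a
      = cutDown a ε * (a - algebraMap ℝ (H →L[ℂ] H) ε) * cutDown a ε := by
    rw [cfc_mul _ _ a, cfc_mul _ _ a, cfc_sub (fun s => s) (fun _ => ε) a, cfc_id' ℝ a,
      cfc_const ε a]
    rfl
  rw [← key]
  refine cfc_nonneg fun s _ => ?_
  rcases le_total s ε with hs | hs
  · simp [max_eq_right (sub_nonpos.mpr hs)]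
  · rw [max_eq_left (sub_nonneg.mpr hs)]
    positivity

theorem mul_norm_sq_le_re_inner_of_mem_closure_range_cutDown (ha : IsSelfAdjoint a) {ε : ℝ}
    {x : H} (hx : x ∈ (LinearMap.range (cutDown a ε : H →ₗ[ℂ] H)).topologicalClosure) :
    ε * ‖x‖ ^ 2 ≤ RCLike.re ⟪a x, x⟫_ℂ := by
  have hclosed : IsClosed {x : H | ε * ‖x‖ ^ 2 ≤ RCLike.re ⟪a x, x⟫_ℂ} :=
    isClosed_le (by fun_prop) (RCLike.continuous_re.comp (a.continuous.inner continuous_id))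
  rw [← SetLike.mem_coe, Submodule.topologicalClosure_coe] at hx
  refine closure_minimal ?_ hclosed hx
  rintro _ ⟨y, rfl⟩
  have hy := ((ContinuousLinearMap.nonneg_iff_isPositive _).mp
    (cutDown_mul_sub_algebraMap_mul_cutDown_nonneg ha ε)).re_inner_nonneg_left y
  have hsymm : ∀ u v, ⟪cutDown a ε u, v⟫_ℂ = ⟪u, cutDown a ε v⟫_ℂ :=
    (isSelfAdjoint_cutDown a ε).isSymmetric
  rw [mul_apply_eq_comp, mul_apply_eq_comp, hsymm, sub_apply,
    ContinuousLinearMap.algebraMap_apply, inner_sub_left, map_sub,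
    RCLike.real_smul_eq_coe_smul (K := ℂ), inner_smul_real_left, RCLike.smul_re,
    inner_self_eq_norm_sq] at hy
  simpa [sub_nonneg] using hy

theorem re_inner_le_mul_norm_sq_of_cutDown_apply_eq_zero (ha : IsSelfAdjoint a) {δ : ℝ}
    {x : H} (hx : cutDown a δ x = 0) : RCLike.re ⟪a x, x⟫_ℂ ≤ δ * ‖x‖ ^ 2 := by
  have hle : a ≤ algebraMap ℝ (H →L[ℂ] H) δ + cutDown a δ := by
    conv_lhs => rw [← cfc_id' ℝ a]
    rw [cutDown, ← cfc_const_add δ _ a]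
    exact cfc_mono fun s _ => by linarith [le_max_left (s - δ) 0]
  have := ContinuousLinearMap.re_inner_le_re_inner_of_le hle x
  rwa [add_apply, hx, add_zero, ContinuousLinearMap.algebraMap_apply,
    RCLike.real_smul_eq_coe_smul (K := ℂ), inner_smul_real_left, RCLike.smul_re,
    inner_self_eq_norm_sq] at this

theorem disjoint_closure_range_cutDown_orthogonal (ha : IsSelfAdjoint a) (ha' : IsSelfAdjoint a')
    {ε δ : ℝ} (h : ‖a - a'‖ + δ < ε) :
    Disjoint (LinearMap.range (cutDown a ε : H →ₗ[ℂ] H)).topologicalClosure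
      (LinearMap.range (cutDown a' δ : H →ₗ[ℂ] H)).topologicalClosureᗮ := by
  rw [Submodule.disjoint_def]
  intro x hx hx'
  rw [(isSelfAdjoint_cutDown a' δ).orthogonal_closure_range] at hx'
  have h₁ := mul_norm_sq_le_re_inner_of_mem_closure_range_cutDown ha hx
  have h₂ := re_inner_le_mul_norm_sq_of_cutDown_apply_eq_zero ha' hx'
  have h₃ := ContinuousLinearMap.re_inner_sub_le a a' x
  have : ‖x‖ ^ 2 ≤ 0 := by nlinarith [sq_nonneg ‖x‖]
  simpa using this

theorem opRank_cutDown_le_of_norm_sub_add_lt (ha : IsSelfAdjoint a) (ha' : IsSelfAdjoint a')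
    {ε δ : ℝ} (h : ‖a - a'‖ + δ < ε) : opRank (cutDown a ε) ≤ opRank (cutDown a' δ) :=
  OrderHomClass.mono Cardinal.toENat
    (Submodule.rank_le_of_disjoint_orthogonal (disjoint_closure_range_cutDown_orthogonal ha ha' h))

theorem opRank_cutDown_lt_top (ha : IsSelfAdjoint a) (hc : IsCompactOperator a) {δ : ℝ}
    (hδ : 0 < δ) : opRank (cutDown a δ) < ⊤ := by
  have := FiniteDimensional.of_isCompactOperator_of_le_re_inner hc _ hδ fun _ hx =>
    mul_norm_sq_le_re_inner_of_mem_closure_range_cutDown ha hx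
  simpa [opRank] using Module.rank_lt_aleph0 ℂ _

end CutDown

theorem stmt_7_general {H : Type*} [NormedAddCommGroup H] [InnerProductSpace ℂ H] [CompleteSpace H]
    (b : Set.Icc (0:ℝ) 1 → H →L[ℂ] H) (hb : Continuous b)
    (hpos : ∀ t, (b t).IsPositive) (hcpt : ∀ t, IsCompactOperator (b t))
    (ε : ℝ) (hε : 0 < ε) :
    ∃ N : ℕ, ∀ t, opRank (cutDown (b t) ε) ≤ (N : ℕ∞) := by
  obtain ⟨s, hs⟩ := isCompact_univ.elim_finite_subcover
    (fun t₀ => {t | ‖b t - b t₀‖ < ε / 2}) (fun _ => isOpen_lt (by fun_prop) continuous_const)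
    (fun t _ => Set.mem_iUnion.mpr ⟨t, by simpa using half_pos hε⟩)
  set N : Set.Icc (0:ℝ) 1 → ℕ := fun t₀ => (opRank (cutDown (b t₀) (ε / 2))).toNat
  refine ⟨s.sup N, fun t => ?_⟩
  obtain ⟨t₀, ht₀s, ht₀⟩ : ∃ t₀ ∈ s, ‖b t - b t₀‖ < ε / 2 := by simpa using hs (Set.mem_univ t)
  calc opRank (cutDown (b t) ε)
      ≤ opRank (cutDown (b t₀) (ε / 2)) :=
        opRank_cutDown_le_of_norm_sub_add_lt (hpos t).isSelfAdjoint (hpos t₀).isSelfAdjoint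
          (by linarith)
    _ = N t₀ :=
        (ENat.natCast_toNat (opRank_cutDown_lt_top (hpos t₀).isSelfAdjoint (hcpt t₀)
          (half_pos hε)).ne).symm
    _ ≤ s.sup N := by exact_mod_cast Finset.le_sup ht₀s

/-- If `b : [0,1] → B(H)` is a norm-continuous family of positive compact
operators on a separable complex Hilbert space `H`, then for every `ε > 0` the ranks of the
cut-downs `(b t − ε)₊` are uniformly bounded by some `N ∈ ℕ`. -/
theorem stmt_7 {H : Type*} [NormedAddCommGroup H] [InnerProductSpace ℂ H] [CompleteSpace H]
    [TopologicalSpace.SeparableSpace H]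
    (b : Set.Icc (0:ℝ) 1 → H →L[ℂ] H) (hb : Continuous b)
    (hpos : ∀ t, (b t).IsPositive) (hcpt : ∀ t, IsCompactOperator (b t))
    (ε : ℝ) (hε : 0 < ε) :
    ∃ N : ℕ, ∀ t, opRank (cutDown (b t) ε) ≤ (N : ℕ∞) :=
  stmt_7_general b hb hpos hcpt ε hε
end

section
/- Let H be a separable complex Hilbert space, let a, b : [0,1] → B(H) be norm-continuous maps whose values are positive compact operators, and let ε > 0. Suppose rank(a(t)) ≤ rank((b(t) − ε)₊) for every t ∈ [0,1]. Then there exists a continuous function g : [0,1] → [0,∞) such that rank(a(t)) ≤ g(t) ≤ rank(b(t)) for all t ∈ [0,1]. -/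
open scoped ENNReal

/-! On the closed range of `(a - δ)₊` the quadratic form of a self-adjoint `a` is at least
`δ ‖x‖²`, while `(b - η)₊ ≥ b - η`. So if `‖a - b‖ + η < δ`, then `(b - η)₊` is bounded below
on the closed range of `(a - δ)₊` and embeds it into its own closed range:
`rank (a - δ)₊ ≤ rank (b - η)₊`. A compact operator bounded below on a closed subspace makes it
finite-dimensional, so `rank (b - δ)₊` is finite for compact `b` and `δ > 0`.

If `‖b s - b t‖ < ε / 4`, this gives
`rank (a s) ≤ rank (b s - ε)₊ ≤ rank (b t - ε / 2)₊ ≤ rank (b s - 0)₊ = rank (b s)`,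
so the natural number `rank (b t - ε / 2)₊` is an admissible value of `g` near `t`. The
admissible values at each point form an interval, so a partition of unity glues these local
constants into a continuous `g`. -/

open scoped InnerProductSpace
open RCLike Filter Topology

theorem IsCompactOperator.finiteDimensional_of_bounded_below {𝕜 E F : Type*}
    [NontriviallyNormedField 𝕜] [CompleteSpace 𝕜] [NormedAddCommGroup E] [NormedSpace 𝕜 E]
    [CompleteSpace E] [NormedAddCommGroup F] [NormedSpace 𝕜 F] {T : E →L[𝕜] F}
    (hT : IsCompactOperator T) {V : Submodule 𝕜 E} (hV : IsClosed (V : Set E)) {c : ℝ}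
    (hc : 0 < c) (hbound : ∀ x ∈ V, c * ‖x‖ ≤ ‖T x‖) : FiniteDimensional 𝕜 V := by
  have : CompleteSpace V := hV.completeSpace_coe
  set B : V →L[𝕜] F := T.comp V.subtypeL
  have hB : IsUniformInducing B := by
    refine (B.antilipschitz_of_bound (K := c.toNNReal⁻¹) fun x => ?_).isUniformInducing
      B.uniformContinuous
    rw [NNReal.coe_inv, Real.coe_toNNReal _ hc.le, le_inv_mul_iff₀ hc]
    exact hbound x x.2
  obtain ⟨K, hK, hTK⟩ := hT.image_closedBall_subset_compact 1
  have hball : Metric.closedBall (0 : V) 1 ⊆ B ⁻¹' K := fun v hv =>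
    hTK ⟨v, by simpa using hv, rfl⟩
  refine FiniteDimensional.of_isCompact_closedBall₀ 𝕜 one_pos ?_
  exact ((totallyBounded_preimage hB hK.totallyBounded).subset hball).isCompact_of_isClosed
    Metric.isClosed_closedBall

theorem exists_continuous_ereal_between_of_local_const {X : Type*} [TopologicalSpace X]
    [NormalSpace X] [ParacompactSpace X] {lo hi : X → EReal}
    (h : ∀ x, ∃ c : ℝ, ∀ᶠ y in 𝓝 x, lo y ≤ c ∧ (c : EReal) ≤ hi y) :
    ∃ g : C(X, ℝ), ∀ x, lo x ≤ g x ∧ (g x : EReal) ≤ hi x := by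
  refine exists_continuous_forall_mem_convex_of_local_const
    (t := fun x => {r : ℝ | lo x ≤ r ∧ (r : EReal) ≤ hi x}) (fun x => ?_) h
  exact (Set.ordConnected_Icc.preimage_mono EReal.coe_strictMono.monotone).convex

lemma ENat.toEReal_mono_s8 : Monotone ENat.toEReal := fun _ _ h => by
  unfold ENat.toEReal
  exact_mod_cast h

lemma ENat.toEReal_natCast_s8 (n : ℕ) : (n : ℕ∞).toEReal = ((n : ℝ) : EReal) := by
  rw [ENat.toEReal]
  norm_cast

lemma ENat.toEReal_nonneg_s8 (n : ℕ∞) : 0 ≤ n.toEReal := EReal.coe_ennreal_nonneg _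

section

variable {H : Type*} [NormedAddCommGroup H] [InnerProductSpace ℂ H]

def closedRange (a : H →L[ℂ] H) : Submodule ℂ H :=
  (LinearMap.range (a : H →ₗ[ℂ] H)).topologicalClosure

lemma re_inner_le_re_inner_of_le {S T : H →L[ℂ] H} (h : S ≤ T) (x : H) :
    re ⟪S x, x⟫_ℂ ≤ re ⟪T x, x⟫_ℂ := by
  have := h.re_inner_nonneg_left x
  rw [sub_apply, inner_sub_left, map_sub] at this
  linarith

lemma re_inner_sub_smul_one_apply (T : H →L[ℂ] H) (δ : ℝ) (x : H) :
    re ⟪(T - δ • 1) x, x⟫_ℂ = re ⟪T x, x⟫_ℂ - δ * ‖x‖ ^ 2 := by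
  simp only [sub_apply, smul_apply,
    one_apply_eq_self, inner_sub_left, map_sub, inner_smul_left_eq_smul,
    RCLike.smul_re, inner_self_eq_norm_sq]

lemma re_inner_sub_re_inner_le (a b : H →L[ℂ] H) (x : H) :
    re ⟪a x, x⟫_ℂ - re ⟪b x, x⟫_ℂ ≤ ‖a - b‖ * ‖x‖ ^ 2 := by
  calc re ⟪a x, x⟫_ℂ - re ⟪b x, x⟫_ℂ = re ⟪(a - b) x, x⟫_ℂ := by
        rw [sub_apply, inner_sub_left, map_sub]
    _ ≤ ‖(a - b) x‖ * ‖x‖ := re_inner_le_norm _ _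
    _ ≤ ‖a - b‖ * ‖x‖ * ‖x‖ := by gcongr; exact (a - b).le_opNorm x
    _ = ‖a - b‖ * ‖x‖ ^ 2 := by ring

variable [CompleteSpace H]

lemma mul_norm_sq_le_re_inner_of_mem_closedRange_cutDown {a : H →L[ℂ] H} (ha : IsSelfAdjoint a)
    (δ : ℝ) {x : H} (hx : x ∈ closedRange (cutDown a δ)) :
    δ * ‖x‖ ^ 2 ≤ re ⟪a x, x⟫_ℂ := by
  set c := cutDown a δ
  have hc : IsSelfAdjoint c := cfc_predicate _ a
  -- `c (a - δ) c = cfc ((s - δ)₊ (s - δ) (s - δ)₊) a ≥ 0`: `a ≥ δ` on the range of `c`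
  have hconj : 0 ≤ c * (a - δ • 1) * c := by
    have : c * (a - δ • 1) * c =
        cfc (fun s => max (s - δ) 0 * (s - δ) * max (s - δ) 0) a := by
      rw [cfc_mul _ _ a, cfc_mul _ _ a, cfc_sub _ _ a, cfc_id' ℝ a, cfc_const δ a,
        Algebra.algebraMap_eq_smul_one]
      rfl
    rw [this]
    refine cfc_nonneg fun s _ => ?_
    rcases le_total s δ with h | h
    · simp [max_eq_right (sub_nonpos.mpr h)]
    · rw [max_eq_left (sub_nonneg.mpr h)]
      have := sub_nonneg.mpr h
      positivity
  have hclosed : IsClosed {x : H | δ * ‖x‖ ^ 2 ≤ re ⟪a x, x⟫_ℂ} :=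
    isClosed_le (by fun_prop) (by fun_prop)
  rw [closedRange, ← SetLike.mem_coe, Submodule.topologicalClosure_coe] at hx
  refine closure_minimal ?_ hclosed hx
  rintro _ ⟨y, rfl⟩
  have := ((ContinuousLinearMap.nonneg_iff_isPositive _).mp hconj).re_inner_nonneg_left y
  have hsymm : ∀ u v, ⟪c u, v⟫_ℂ = ⟪u, c v⟫_ℂ := hc.isSymmetric
  rw [mul_apply_eq_comp, mul_apply_eq_comp, hsymm, re_inner_sub_smul_one_apply] at this
  exact sub_nonneg.mp this

lemma sub_smul_one_le_cutDown {a : H →L[ℂ] H} (ha : IsSelfAdjoint a) (η : ℝ) :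
    a - η • 1 ≤ cutDown a η := by
  have : a - η • 1 = cfc (fun s : ℝ => s - η) a := by
    rw [cfc_sub _ _ a, cfc_id' ℝ a, cfc_const η a, Algebra.algebraMap_eq_smul_one]
  rw [this]
  exact cfc_mono fun s _ => le_max_left _ _

lemma mul_norm_le_norm_cutDown_apply {a b : H →L[ℂ] H} (ha : IsSelfAdjoint a)
    (hb : IsSelfAdjoint b) {δ η : ℝ} {x : H} (hx : x ∈ closedRange (cutDown a δ)) :
    (δ - ‖a - b‖ - η) * ‖x‖ ≤ ‖cutDown b η x‖ := by
  have h₁ := mul_norm_sq_le_re_inner_of_mem_closedRange_cutDown ha δ hx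
  have h₂ := re_inner_sub_re_inner_le a b x
  have h₃ := re_inner_le_re_inner_of_le (sub_smul_one_le_cutDown hb η) x
  rw [re_inner_sub_smul_one_apply] at h₃
  have h₄ := re_inner_le_norm (𝕜 := ℂ) (cutDown b η x) x
  have key : (δ - ‖a - b‖ - η) * ‖x‖ * ‖x‖ ≤ ‖cutDown b η x‖ * ‖x‖ := by nlinarith
  rcases (norm_nonneg x).eq_or_lt with h | h
  · simp [← h]
  · exact le_of_mul_le_mul_right key h

lemma opRank_cutDown_le_opRank_cutDown {a b : H →L[ℂ] H} (ha : IsSelfAdjoint a)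
    (hb : IsSelfAdjoint b) {δ η : ℝ} (h : ‖a - b‖ + η < δ) :
    opRank (cutDown a δ) ≤ opRank (cutDown b η) := by
  set V := closedRange (cutDown a δ)
  set W := closedRange (cutDown b η)
  let φ : V →ₗ[ℂ] W := ((cutDown b η : H →ₗ[ℂ] H) ∘ₗ V.subtype).codRestrict W fun v =>
    Submodule.le_topologicalClosure _ (LinearMap.mem_range_self _ _)
  have hφ : Function.Injective φ := by
    refine (injective_iff_map_eq_zero φ).mpr fun v hv => ?_
    have := mul_norm_le_norm_cutDown_apply ha hb (η := η) v.2
    have hv' : cutDown b η v = 0 := congrArg Subtype.val hv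
    rw [hv', norm_zero] at this
    have : ‖v‖ ≤ 0 := nonpos_of_mul_nonpos_right this (by linarith)
    exact norm_le_zero_iff.mp this
  exact Cardinal.toENat.monotone' (LinearMap.rank_le_of_injective φ hφ)

lemma cutDown_zero {b : H →L[ℂ] H} (hb : b.IsPositive) : cutDown b 0 = b := by
  have hb' := (ContinuousLinearMap.nonneg_iff_isPositive b).mpr hb
  calc cutDown b 0 = cfc (fun s : ℝ => s) b :=
        cfc_congr fun s hs => by simp [spectrum_nonneg_of_nonneg hb' hs]
    _ = b := cfc_id' ℝ b

lemma opRank_cutDown_ne_top {b : H →L[ℂ] H} (hb : b.IsPositive) (hcpt : IsCompactOperator b)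
    {ε : ℝ} (hε : 0 < ε) : opRank (cutDown b ε) ≠ ⊤ := by
  have : FiniteDimensional ℂ (closedRange (cutDown b ε)) := by
    refine hcpt.finiteDimensional_of_bounded_below (Submodule.isClosed_topologicalClosure _) hε
      fun x hx => ?_
    simpa [cutDown_zero hb] using
      mul_norm_le_norm_cutDown_apply hb.isSelfAdjoint hb.isSelfAdjoint (η := 0) hx
  rw [opRank, Ne, Cardinal.toENat_eq_top, not_le]
  exact Module.rank_lt_aleph0 ℂ (closedRange (cutDown b ε))

end

theorem stmt_8_general {H : Type*} [NormedAddCommGroup H] [InnerProductSpace ℂ H] [CompleteSpace H]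
    (a b : Set.Icc (0:ℝ) 1 → H →L[ℂ] H) (hb : Continuous b)
    (hbpos : ∀ t, (b t).IsPositive) (hbcpt : ∀ t, IsCompactOperator (b t))
    (ε : ℝ) (hε : 0 < ε)
    (hrank : ∀ t, opRank (a t) ≤ opRank (cutDown (b t) ε)) :
    ∃ g : Set.Icc (0:ℝ) 1 → ℝ, Continuous g ∧ (∀ t, 0 ≤ g t) ∧
      ∀ t, (opRank (a t)).toEReal ≤ (g t : EReal) ∧
        (g t : EReal) ≤ (opRank (b t)).toEReal := by
  have hsa : ∀ t, IsSelfAdjoint (b t) := fun t => (hbpos t).isSelfAdjoint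
  have hloc : ∀ t, ∃ c : ℝ, ∀ᶠ s in 𝓝 t,
      (opRank (a s)).toEReal ≤ c ∧ (c : EReal) ≤ (opRank (b s)).toEReal := by
    intro t
    obtain ⟨m, hm⟩ := ENat.ne_top_iff_exists.mp
      (opRank_cutDown_ne_top (hbpos t) (hbcpt t) (half_pos hε))
    have hnear : ∀ᶠ s in 𝓝 t, ‖b s - b t‖ < ε / 4 := by
      simpa only [Metric.mem_ball, dist_eq_norm] using
        hb.continuousAt.eventually (Metric.ball_mem_nhds (b t) (by positivity : 0 < ε / 4))
    refine ⟨m, hnear.mono fun s hs => ⟨?_, ?_⟩⟩ <;> rw [← ENat.toEReal_natCast_s8, hm] <;>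
      refine ENat.toEReal_mono_s8 ?_
    · exact (hrank s).trans (opRank_cutDown_le_opRank_cutDown (hsa s) (hsa t) (by linarith))
    · rw [← cutDown_zero (hbpos s)]
      exact opRank_cutDown_le_opRank_cutDown (hsa t) (hsa s) (by rw [norm_sub_rev]; linarith)
  obtain ⟨g, hg⟩ := exists_continuous_ereal_between_of_local_const hloc
  exact ⟨g, g.continuous, fun t => EReal.coe_nonneg.mp ((ENat.toEReal_nonneg_s8 _).trans (hg t).1),
    hg⟩

/-- Let `a, b : [0,1] → B(H)` be norm-continuous families of positive
compact operators on a separable complex Hilbert space, let `ε > 0`, and suppose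
`rank (a t) ≤ rank ((b t − ε)₊)` for all `t`.  Then there is a continuous function
`g : [0,1] → [0,∞)` with `rank (a t) ≤ g t ≤ rank (b t)` for all `t`. -/
theorem stmt_8 {H : Type*} [NormedAddCommGroup H] [InnerProductSpace ℂ H] [CompleteSpace H]
    [TopologicalSpace.SeparableSpace H]
    (a b : Set.Icc (0:ℝ) 1 → H →L[ℂ] H) (ha : Continuous a) (hb : Continuous b)
    (hapos : ∀ t, (a t).IsPositive) (hacpt : ∀ t, IsCompactOperator (a t))
    (hbpos : ∀ t, (b t).IsPositive) (hbcpt : ∀ t, IsCompactOperator (b t))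
    (ε : ℝ) (hε : 0 < ε)
    (hrank : ∀ t, opRank (a t) ≤ opRank (cutDown (b t) ε)) :
    ∃ g : Set.Icc (0:ℝ) 1 → ℝ, Continuous g ∧ (∀ t, 0 ≤ g t) ∧
      ∀ t, (opRank (a t)).toEReal ≤ (g t : EReal) ∧
        (g t : EReal) ≤ (opRank (b t)).toEReal :=
  stmt_8_general a b hb hbpos hbcpt ε hε hrank
end

section
/- Let X be a compact metric space. The map Φ from ProbabilityMeasure(X), equipped with the topology induced by the Lévy–Prokhorov metric, into the weak-* dual of the Banach space C(X, ℝ) of real-valued continuous functions, defined by Φ(μ)(f) = ∫ f dμ, is a topological embedding (it is injective, continuous, and a homeomorphism onto its image). -/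
open MeasureTheory BoundedContinuousFunction

variable {X : Type*} [MetricSpace X] [CompactSpace X] [MeasurableSpace X] [BorelSpace X]

/-- Integration against a Borel probability measure on a compact metric space `X`, as an
element `Φ(μ)` of the weak-* dual of the Banach space `C(X, ℝ)`: `Φ(μ)(f) = ∫ f dμ`. -/
noncomputable def integralFunctional (ν : ProbabilityMeasure X) : WeakDual ℝ C(X, ℝ) :=
  StrongDual.toWeakDual <|
    LinearMap.mkContinuous
      { toFun := fun f => ∫ x, f x ∂(ν : Measure X)
        map_add' := fun f g => by
          simpa using integral_add ((mkOfCompact f).integrable (ν : Measure X))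
            ((mkOfCompact g).integrable (ν : Measure X))
        map_smul' := fun c f => by
          simpa using integral_smul c (fun x => f x) }
      1
      (fun f => by
        have h := (mkOfCompact f).norm_integral_le_mul_norm (ν : Measure X)
        simpa [BoundedContinuousFunction.norm_mkOfCompact, one_mul] using h.trans (by
          simp [measure_univ]))

/-! On a compact space every continuous function is bounded, so pointwise convergence of the
functionals `Φ(μ)` is exactly weak convergence of the measures `μ`; the Lévy–Prokhorov metric
metrizes weak convergence on a separable space. Injectivity is then free, the space of
probability measures being Hausdorff. -/

lemma continuous_integralFunctional : Continuous (integralFunctional (X := X)) :=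
  WeakBilin.continuous_of_continuous_eval _ fun f =>
    ProbabilityMeasure.continuous_integral_boundedContinuousFunction (mkOfCompact f)

lemma isInducing_integralFunctional : Topology.IsInducing (integralFunctional (X := X)) := by
  refine Topology.isInducing_iff_nhds.2 fun μ =>
    le_antisymm (continuous_integralFunctional.tendsto μ).le_comap (Filter.tendsto_id'.1 ?_)
  refine ProbabilityMeasure.tendsto_iff_forall_integral_tendsto.2 fun g => ?_
  exact ((WeakBilin.eval_continuous _ g.toContinuousMap).tendsto _).comp Filter.tendsto_comap

lemma isEmbedding_integralFunctional : Topology.IsEmbedding (integralFunctional (X := X)) :=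
  isInducing_integralFunctional.isEmbedding

/-- For a compact metric space `X`, the map `Φ` from `ProbabilityMeasure X`,
equipped with the Lévy–Prokhorov metric topology, to the weak-* dual of `C(X, ℝ)`,
given by `Φ(μ)(f) = ∫ f dμ`, is a topological embedding. -/
theorem stmt_17 :
    Topology.IsEmbedding fun μ : LevyProkhorov (ProbabilityMeasure X) =>
      integralFunctional (LevyProkhorov.toMeasureEquiv μ) :=
  isEmbedding_integralFunctional.comp LevyProkhorov.probabilityMeasureHomeomorph.symm.isEmbedding
end
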